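/- arXiv:2502.05355 — 2 statements merged into one kernel-verified Lean document; each statement's English description precedes it below -/
import Mathlib

section
/- The residuals r_k = A x_k − b of NGMRES applied to the fixed-point iteration q(x) = Mx + b, M = I − A, satisfy the recurrence relation r_{k+1} = (1 + Σ_{i=0}^{m_k} β_i^{(k)}) M r_k − Σ_{i=0}^{m_k} β_i^{(k)} r_{k−i}, where β_i^{(k)} are the coefficients used in the NGMRES update x_{k+1} = q(x_k) + Σ_{i=0}^{m_k} β_i^{(k)} (q(x_k) − x_{k−i}). -/
open Matrix Filter

noncomputable section

/-- The residual `r(x) = A x - b` of the linear system `A x = b`. -/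
def residv {n : ℕ} (A : Matrix (Fin n) (Fin n) ℝ) (b x : Fin n → ℝ) : Fin n → ℝ :=
  A.mulVec x - b

/-- The Euclidean 2-norm on `Fin n → ℝ`. -/
def norm2 {n : ℕ} (x : Fin n → ℝ) : ℝ := Real.sqrt (x ⬝ᵥ x)

/-- The fixed-point map `q(x) = M x + b` with `M = I - A`. -/
def qmap {n : ℕ} (A : Matrix (Fin n) (Fin n) ℝ) (b x : Fin n → ℝ) : Fin n → ℝ :=
  (1 - A).mulVec x + b

/-- One NGMRES update from step `k`, with window `mk` and coefficients `β`:
`x_{k+1} = q(x_k) + ∑_{i=0}^{mk} β_i (q(x_k) - x_{k-i})`. -/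
def ngmresUpdate {n : ℕ} (A : Matrix (Fin n) (Fin n) ℝ) (b : Fin n → ℝ)
    (x : ℕ → Fin n → ℝ) (β : ℕ → ℝ) (k mk : ℕ) : Fin n → ℝ :=
  qmap A b (x k) + ∑ i ∈ Finset.range (mk + 1), β i • (qmap A b (x k) - x (k - i))

/-- The NGMRES iteration with window function `mk` (e.g. `mk k = min k m` for NGMRES(m),
`mk k = k` for full NGMRES): each step uses coefficients minimizing the 2-norm of the
next residual. -/
def IsNGMRES {n : ℕ} (A : Matrix (Fin n) (Fin n) ℝ) (b x0 : Fin n → ℝ) (mk : ℕ → ℕ)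
    (x : ℕ → Fin n → ℝ) (β : ℕ → ℕ → ℝ) : Prop :=
  x 0 = x0 ∧ ∀ k, x (k + 1) = ngmresUpdate A b x (β k) k (mk k) ∧
    ∀ β' : ℕ → ℝ, norm2 (residv A b (x (k + 1))) ≤
      norm2 (residv A b (ngmresUpdate A b x β' k (mk k)))

/-- The Krylov subspace `span {r0, A r0, …, A^{k-1} r0}`. -/
def krylov {n : ℕ} (A : Matrix (Fin n) (Fin n) ℝ) (r0 : Fin n → ℝ) (k : ℕ) :
    Submodule ℝ (Fin n → ℝ) :=
  Submodule.span ℝ {v | ∃ i < k, v = (A ^ i).mulVec r0}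

/-- GMRES: `x_k` minimizes the residual 2-norm over the affine space `x0 + K_k`. -/
def IsGMRES {n : ℕ} (A : Matrix (Fin n) (Fin n) ℝ) (b x0 : Fin n → ℝ)
    (x : ℕ → Fin n → ℝ) : Prop :=
  x 0 = x0 ∧ ∀ k, x k - x0 ∈ krylov A (residv A b x0) k ∧
    ∀ y : Fin n → ℝ, y - x0 ∈ krylov A (residv A b x0) k →
      norm2 (residv A b (x k)) ≤ norm2 (residv A b y)

/-- One Anderson acceleration update from step `k`, with window `mk`:
`x_{k+1} = q(x_k) + ∑_{i=1}^{mk} γ_i (q(x_k) - q(x_{k-i}))`. -/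
def aaUpdate {n : ℕ} (A : Matrix (Fin n) (Fin n) ℝ) (b : Fin n → ℝ)
    (x : ℕ → Fin n → ℝ) (γ : ℕ → ℝ) (k mk : ℕ) : Fin n → ℝ :=
  qmap A b (x k) + ∑ i ∈ Finset.Icc 1 mk, γ i • (qmap A b (x k) - qmap A b (x (k - i)))

/-- The Anderson acceleration least-squares objective
`r(x_k) + ∑_{i=1}^{mk} γ_i (r(x_k) - r(x_{k-i}))`. -/
def aaObj {n : ℕ} (A : Matrix (Fin n) (Fin n) ℝ) (b : Fin n → ℝ)
    (x : ℕ → Fin n → ℝ) (γ : ℕ → ℝ) (k mk : ℕ) : Fin n → ℝ :=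
  residv A b (x k) + ∑ i ∈ Finset.Icc 1 mk, γ i • (residv A b (x k) - residv A b (x (k - i)))

/-- Anderson acceleration with window function `mk`. -/
def IsAA {n : ℕ} (A : Matrix (Fin n) (Fin n) ℝ) (b x0 : Fin n → ℝ) (mk : ℕ → ℕ)
    (x : ℕ → Fin n → ℝ) (γ : ℕ → ℕ → ℝ) : Prop :=
  x 0 = x0 ∧ ∀ k, x (k + 1) = aaUpdate A b x (γ k) k (mk k) ∧
    ∀ γ' : ℕ → ℝ, norm2 (aaObj A b x (γ k) k (mk k)) ≤ norm2 (aaObj A b x γ' k (mk k))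

/-- The spectral norm `‖A‖₂` (the ℓ²→ℓ² operator norm). -/
def specNorm {n : ℕ} (A : Matrix (Fin n) (Fin n) ℝ) : ℝ :=
  ‖LinearMap.toContinuousLinearMap (Matrix.toEuclideanLin A)‖

/-- The spectral radius of a real matrix (computed over `ℂ`). -/
def specRad {n : ℕ} (M : Matrix (Fin n) (Fin n) ℝ) : ℝ :=
  (spectralRadius ℂ (M.map Complex.ofReal)).toReal

theorem add_sum_smul_sub_eq {ι R V : Type*} [Ring R] [AddCommGroup V] [Module R V]
    (s : Finset ι) (c : ι → R) (v : V) (w : ι → V) :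
    v + ∑ i ∈ s, c i • (v - w i) = (1 + ∑ i ∈ s, c i) • v - ∑ i ∈ s, c i • w i := by
  simp only [smul_sub, Finset.sum_sub_distrib, ← Finset.sum_smul, add_smul, one_smul]
  abel

section Residual

variable {n : ℕ} (A : Matrix (Fin n) (Fin n) ℝ) (b : Fin n → ℝ)

theorem residv_add (y v : Fin n → ℝ) : residv A b (y + v) = residv A b y + A *ᵥ v := by
  simp only [residv, mulVec_add]
  abel

theorem mulVec_sub_eq_residv_sub (y z : Fin n → ℝ) :
    A *ᵥ (y - z) = residv A b y - residv A b z := by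
  simp only [residv, mulVec_sub, sub_sub_sub_cancel_right]

theorem residv_add_sum_smul_sub {ι : Type*} (s : Finset ι) (c : ι → ℝ)
    (y : Fin n → ℝ) (z : ι → Fin n → ℝ) :
    residv A b (y + ∑ i ∈ s, c i • (y - z i)) =
      residv A b y + ∑ i ∈ s, c i • (residv A b y - residv A b (z i)) := by
  simp only [residv_add, mulVec_sum, mulVec_smul, mulVec_sub_eq_residv_sub A b]

-- `A` commutes with `M = I - A`, so `A (M y + b) - b = M (A y - b)`.
theorem residv_qmap (y : Fin n → ℝ) : residv A b (qmap A b y) = (1 - A) *ᵥ residv A b y := by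
  simp only [residv, qmap, mulVec_add, mulVec_sub, mulVec_mulVec, sub_mulVec, one_mulVec,
    sub_mul, one_mul]
  abel

theorem residv_ngmresUpdate (x : ℕ → Fin n → ℝ) (β : ℕ → ℝ) (k mk : ℕ) :
    residv A b (ngmresUpdate A b x β k mk) =
      (1 - A) *ᵥ residv A b (x k) + ∑ i ∈ Finset.range (mk + 1),
        β i • ((1 - A) *ᵥ residv A b (x k) - residv A b (x (k - i))) := by
  rw [ngmresUpdate, residv_add_sum_smul_sub, residv_qmap]

end Residual

/-- the residual recurrence
`r_{k+1} = (1 + ∑ β_i) M r_k - ∑ β_i r_{k-i}`, `M = I - A`, for an arbitrary NGMRES update. -/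
theorem stmt1 (n : ℕ) (A : Matrix (Fin n) (Fin n) ℝ) (b : Fin n → ℝ)
    (x : ℕ → Fin n → ℝ) (β : ℕ → ℝ) (k mk : ℕ)
    (hx : x (k + 1) = ngmresUpdate A b x β k mk) :
    residv A b (x (k + 1)) =
      (1 + ∑ i ∈ Finset.range (mk + 1), β i) • (1 - A).mulVec (residv A b (x k))
        - ∑ i ∈ Finset.range (mk + 1), β i • residv A b (x (k - i)) := by
  rw [hx, residv_ngmresUpdate, add_sum_smul_sub_eq]

end
end

section
/- Assume full NGMRES and GMRES are applied to the linear system Ax = b with the same initial guess x_0 ≠ x*, where x* is a solution. Assume for some k_0 > 0 that the GMRES residuals satisfy r_{k_0−1}^G ≠ 0 and ‖r_{k−1}^G‖₂ > ‖r_k^G‖₂ for each k with 0 < k < k_0. Then the full NGMRES residuals coincide with the GMRES residuals: r_j^{NG} = r_j^G for all 0 ≤ j ≤ k_0. -/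
open Matrix Filter

noncomputable section

/-!
When GMRES does not stagnate, each full NGMRES iterate contributes a new Krylov direction, so by
induction `span {x_i - x_0 : i ≤ k} = K_k` for `k < k_0`. Since `r_i = r_0 + A (x_i - x_0)`, this
gives `span {r_0, …, r_k} = K_{k+1}`, and the affine space searched by full NGMRES at step `k`,
`q(x_k) + span {q(x_k) - x_i : i ≤ k} = x_0 + span {x_i - x_0, r_k : i ≤ k}`, is exactly the GMRES
space `x_0 + K_{k+1}`. Both methods minimize the strictly convex residual norm over the same affine
space, so their residuals agree.
-/

open Submodule

section Residual

variable {n : ℕ}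

lemma residv_eq_add_mulVec_sub (A : Matrix (Fin n) (Fin n) ℝ) (b x0 y : Fin n → ℝ) :
    residv A b y = residv A b x0 + A *ᵥ (y - x0) := by
  simp only [residv, mulVec_sub]
  abel

lemma qmap_eq_sub_residv (A : Matrix (Fin n) (Fin n) ℝ) (b x : Fin n → ℝ) :
    qmap A b x = x - residv A b x := by
  simp only [qmap, residv, sub_mulVec, one_mulVec]
  abel

lemma norm2_le_norm2_iff (u v : Fin n → ℝ) : norm2 u ≤ norm2 v ↔ u ⬝ᵥ u ≤ v ⬝ᵥ v :=
  Real.sqrt_le_sqrt_iff (Finset.sum_nonneg fun i _ => mul_self_nonneg (v i))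

lemma eq_of_norm2_le_norm2_midpoint {u v : Fin n → ℝ}
    (hu : norm2 u ≤ norm2 ((1 / 2 : ℝ) • (u + v))) (hv : norm2 v ≤ norm2 ((1 / 2 : ℝ) • (u + v))) :
    u = v := by
  rw [norm2_le_norm2_iff] at hu hv
  have hmid : ((1 / 2 : ℝ) • (u + v)) ⬝ᵥ ((1 / 2 : ℝ) • (u + v))
      = (u ⬝ᵥ u + 2 * (u ⬝ᵥ v) + v ⬝ᵥ v) / 4 := by
    simp only [smul_dotProduct, dotProduct_smul, add_dotProduct, dotProduct_add,
      dotProduct_comm v u, smul_eq_mul]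
    ring
  have hdiff : (u - v) ⬝ᵥ (u - v) = u ⬝ᵥ u - 2 * (u ⬝ᵥ v) + v ⬝ᵥ v := by
    simp only [sub_dotProduct, dotProduct_sub, dotProduct_comm v u]
    ring
  have hnonpos : (u - v) ⬝ᵥ (u - v) ≤ 0 := by linarith
  exact sub_eq_zero.mp (dotProduct_self_eq_zero.mp
    (le_antisymm hnonpos (Finset.sum_nonneg fun i _ => mul_self_nonneg _)))

lemma residv_eq_of_minimizers {A : Matrix (Fin n) (Fin n) ℝ} {b x0 y z : Fin n → ℝ}
    {K : Submodule ℝ (Fin n → ℝ)} (hy : y - x0 ∈ K) (hz : z - x0 ∈ K)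
    (hymin : ∀ w, w - x0 ∈ K → norm2 (residv A b y) ≤ norm2 (residv A b w))
    (hzmin : ∀ w, w - x0 ∈ K → norm2 (residv A b z) ≤ norm2 (residv A b w)) :
    residv A b y = residv A b z := by
  set m := (1 / 2 : ℝ) • (y + z)
  have hm : m - x0 ∈ K := by
    have : m - x0 = (1 / 2 : ℝ) • ((y - x0) + (z - x0)) := by module
    exact this ▸ K.smul_mem _ (K.add_mem hy hz)
  have hres : residv A b m = (1 / 2 : ℝ) • (residv A b y + residv A b z) := by
    simp only [m, residv, mulVec_smul, mulVec_add]
    module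
  exact eq_of_norm2_le_norm2_midpoint (hres ▸ hymin m hm) (hres ▸ hzmin m hm)

end Residual

section Krylov

variable {n : ℕ}

lemma krylov_zero (A : Matrix (Fin n) (Fin n) ℝ) (r0 : Fin n → ℝ) : krylov A r0 0 = ⊥ := by
  simp [krylov]

lemma krylov_mono (A : Matrix (Fin n) (Fin n) ℝ) (r0 : Fin n → ℝ) : Monotone (krylov A r0) :=
  fun _ _ hjk => span_mono fun _ ⟨i, hi, hv⟩ => ⟨i, hi.trans_le hjk, hv⟩

lemma krylov_succ (A : Matrix (Fin n) (Fin n) ℝ) (r0 : Fin n → ℝ) (k : ℕ) :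
    krylov A r0 (k + 1) = span ℝ {r0} ⊔ (krylov A r0 k).map A.mulVecLin := by
  have hgen : {v | ∃ i < k + 1, v = (A ^ i) *ᵥ r0}
      = insert r0 (A.mulVecLin '' {v | ∃ i < k, v = (A ^ i) *ᵥ r0}) := by
    ext v
    simp only [Set.mem_ofPred_eq, Set.mem_insert_iff, Set.mem_image, mulVecLin_apply]
    constructor
    · rintro ⟨_ | i, hi, rfl⟩
      · simp
      · exact Or.inr ⟨_, ⟨i, by omega, rfl⟩, by rw [mulVec_mulVec, pow_succ']⟩
    · rintro (rfl | ⟨_, ⟨i, hi, rfl⟩, rfl⟩)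
      · exact ⟨0, by omega, by simp⟩
      · exact ⟨i + 1, by omega, by rw [mulVec_mulVec, pow_succ']⟩
  rw [krylov, krylov, hgen, span_insert, span_image]

end Krylov

section Iterates

variable {n : ℕ}

def displacementSpan (x : ℕ → Fin n → ℝ) (x0 : Fin n → ℝ) (k : ℕ) : Submodule ℝ (Fin n → ℝ) :=
  span ℝ ((fun i => x i - x0) '' ↑(Finset.range (k + 1)))

lemma displacementSpan_zero {x : ℕ → Fin n → ℝ} {x0 : Fin n → ℝ} (hx : x 0 = x0) :
    displacementSpan x x0 0 = ⊥ := by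
  simp [displacementSpan, hx]

lemma displacementSpan_succ (x : ℕ → Fin n → ℝ) (x0 : Fin n → ℝ) (k : ℕ) :
    displacementSpan x x0 (k + 1) = displacementSpan x x0 k ⊔ span ℝ {x (k + 1) - x0} := by
  rw [displacementSpan, Finset.range_add_one, Finset.coe_insert, Set.image_insert_eq, span_insert,
    sup_comm, displacementSpan]

lemma sub_mem_displacementSpan (x : ℕ → Fin n → ℝ) (x0 : Fin n → ℝ) {i k : ℕ} (hik : i ≤ k) :
    x i - x0 ∈ displacementSpan x x0 k :=
  subset_span ⟨i, by simpa [Nat.lt_succ_iff] using hik, rfl⟩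

variable {A : Matrix (Fin n) (Fin n) ℝ} {b x0 : Fin n → ℝ} {x : ℕ → Fin n → ℝ}

lemma span_residv_eq_krylov_succ (hx : x 0 = x0) {k : ℕ}
    (hD : displacementSpan x x0 k = krylov A (residv A b x0) k) :
    span ℝ ((fun i => residv A b (x i)) '' ↑(Finset.range (k + 1)))
      = krylov A (residv A b x0) (k + 1) := by
  rw [krylov_succ, ← hD, displacementSpan, map_span, ← Set.image_comp, ← span_insert]
  apply le_antisymm <;> rw [span_le]
  · rintro _ ⟨i, hi, rfl⟩
    simp only [SetLike.mem_coe]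
    rw [residv_eq_add_mulVec_sub A b x0 (x i)]
    exact add_mem (subset_span (Set.mem_insert _ _))
      (subset_span (Set.mem_insert_of_mem _ ⟨i, hi, rfl⟩))
  · have h0 : (0 : ℕ) ∈ (Finset.range (k + 1) : Set ℕ) := by simp
    rintro _ (rfl | ⟨i, hi, rfl⟩)
    · exact subset_span ⟨0, h0, by simp only [hx]⟩
    · have : A.mulVecLin (x i - x0) = residv A b (x i) - residv A b (x 0) := by
        rw [hx, residv_eq_add_mulVec_sub A b x0 (x i)]
        simp
      rw [Function.comp_apply, this]
      exact sub_mem (subset_span ⟨i, hi, rfl⟩) (subset_span ⟨0, h0, rfl⟩)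

lemma krylov_succ_eq_sup_span_residv (hx : x 0 = x0) {k : ℕ}
    (hD : ∀ i ≤ k, displacementSpan x x0 i = krylov A (residv A b x0) i) :
    krylov A (residv A b x0) (k + 1)
      = displacementSpan x x0 k ⊔ span ℝ {residv A b (x k)} := by
  have hres : ∀ i ≤ k, residv A b (x i) ∈ krylov A (residv A b x0) (i + 1) := fun i hi =>
    span_residv_eq_krylov_succ hx (hD i hi) ▸ subset_span ⟨i, by simp, rfl⟩
  apply le_antisymm
  · rw [← span_residv_eq_krylov_succ hx (hD k le_rfl), span_le]
    rintro _ ⟨i, hi, rfl⟩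
    rcases (Nat.lt_succ_iff.mp (Finset.mem_range.mp hi)).lt_or_eq with hik | rfl
    · refine mem_sup_left ?_
      rw [hD k le_rfl]
      exact krylov_mono A _ hik (hres i hik.le)
    · exact mem_sup_right (mem_span_singleton_self _)
  · rw [hD k le_rfl, sup_le_iff, span_singleton_le_iff_mem]
    exact ⟨krylov_mono A _ k.le_succ, hres k le_rfl⟩

end Iterates

lemma sup_span_singleton_eq_of_mem_of_notMem {K V : Type*} [DivisionRing K] [AddCommGroup V]
    [Module K V] {U : Submodule K V} {x y : V} (hx : x ∈ U ⊔ span K {y}) (hxU : x ∉ U) :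
    U ⊔ span K {x} = U ⊔ span K {y} := by
  have hy : y ∈ U ⊔ span K {x} := by
    have := mem_span_insert_exchange (K := K) (s := (U : Set V))
      (by rwa [span_insert, span_eq, sup_comm]) (by rwa [span_eq])
    rwa [span_insert, span_eq, sup_comm] at this
  exact le_antisymm (sup_le le_sup_left (by rwa [span_singleton_le_iff_mem]))
    (sup_le le_sup_left (by rwa [span_singleton_le_iff_mem]))

section NGMRES

variable {n : ℕ} {A : Matrix (Fin n) (Fin n) ℝ} {b x0 : Fin n → ℝ}

lemma range_ngmresUpdate (x : ℕ → Fin n → ℝ) (k mk : ℕ) :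
    Set.range (fun β' => ngmresUpdate A b x β' k mk)
      = {y | y - qmap A b (x k) ∈
          span ℝ ((fun i => qmap A b (x k) - x (k - i)) '' ↑(Finset.range (mk + 1)))} := by
  ext y
  simp only [Set.mem_range, Set.mem_ofPred_eq, mem_span_image_finset_iff_exists_fun',
    ngmresUpdate]
  constructor
  · rintro ⟨β', rfl⟩
    exact ⟨β', (add_sub_cancel_left _ _).symm⟩
  · rintro ⟨c, hc⟩
    exact ⟨c, by rw [hc, add_sub_cancel]⟩

lemma span_qmap_sub_eq {x : ℕ → Fin n → ℝ} (hx : x 0 = x0) (k : ℕ) :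
    span ℝ ((fun i => qmap A b (x k) - x (k - i)) '' ↑(Finset.range (k + 1)))
      = displacementSpan x x0 k ⊔ span ℝ {residv A b (x k)} := by
  have hmem : ∀ {i}, i ≤ k → x i - x0 ∈ displacementSpan x x0 k ⊔ span ℝ {residv A b (x k)} :=
    fun hi => mem_sup_left (sub_mem_displacementSpan x x0 hi)
  have hgen : ∀ {i}, i ≤ k → qmap A b (x k) - x (k - i) ∈
      span ℝ ((fun i => qmap A b (x k) - x (k - i)) '' ↑(Finset.range (k + 1))) :=
    fun hi => subset_span ⟨_, by simpa [Nat.lt_succ_iff] using hi, rfl⟩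
  apply le_antisymm
  · rw [span_le]
    rintro _ ⟨i, -, rfl⟩
    have : qmap A b (x k) - x (k - i) = (x k - x0) - (x (k - i) - x0) - residv A b (x k) := by
      rw [qmap_eq_sub_residv]
      abel
    simp only [SetLike.mem_coe]
    rw [this]
    exact sub_mem (sub_mem (hmem le_rfl) (hmem (Nat.sub_le k i)))
      (mem_sup_right (mem_span_singleton_self _))
  · rw [sup_le_iff, displacementSpan, span_le, span_singleton_le_iff_mem]
    constructor
    · rintro _ ⟨i, hi, rfl⟩
      have hik : i ≤ k := Nat.lt_succ_iff.mp (Finset.mem_range.mp hi)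
      have : x i - x0 = (qmap A b (x k) - x (k - k)) - (qmap A b (x k) - x (k - (k - i))) := by
        rw [Nat.sub_self, Nat.sub_sub_self hik, hx]
        abel
      simp only [SetLike.mem_coe]
      rw [this]
      exact sub_mem (hgen le_rfl) (hgen (Nat.sub_le k i))
    · have : residv A b (x k) = -(qmap A b (x k) - x (k - 0)) := by
        rw [qmap_eq_sub_residv, Nat.sub_zero]
        abel
      rw [this]
      exact neg_mem (hgen (Nat.zero_le k))

lemma range_ngmresUpdate_self {x : ℕ → Fin n → ℝ} (hx : x 0 = x0) (k : ℕ) :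
    Set.range (fun β' => ngmresUpdate A b x β' k k)
      = {y | y - x0 ∈ displacementSpan x x0 k ⊔ span ℝ {residv A b (x k)}} := by
  rw [range_ngmresUpdate, ← span_qmap_sub_eq hx]
  ext y
  have hq : qmap A b (x k) - x0 ∈
      span ℝ ((fun i => qmap A b (x k) - x (k - i)) '' ↑(Finset.range (k + 1))) :=
    subset_span ⟨k, by simp, by simp only [Nat.sub_self, hx]⟩
  simp only [Set.mem_ofPred_eq]
  rw [← add_mem_cancel_right hq, sub_add_sub_cancel]

lemma IsNGMRES.residv_succ_eq {β : ℕ → ℕ → ℝ} {xNG xG : ℕ → Fin n → ℝ}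
    (hNG : IsNGMRES A b x0 (fun k => k) xNG β) (hG : IsGMRES A b x0 xG) {k : ℕ}
    (hK : krylov A (residv A b x0) (k + 1)
      = displacementSpan xNG x0 k ⊔ span ℝ {residv A b (xNG k)}) :
    residv A b (xNG (k + 1)) = residv A b (xG (k + 1)) ∧
      xNG (k + 1) - x0 ∈ krylov A (residv A b x0) (k + 1) := by
  obtain ⟨hNG0, hNGstep⟩ := hNG
  have hrange := range_ngmresUpdate_self (A := A) (b := b) hNG0 k
  rw [← hK] at hrange
  have hmem : xNG (k + 1) - x0 ∈ krylov A (residv A b x0) (k + 1) := by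
    rw [← Set.mem_ofPred_eq (p := fun y => y - x0 ∈ _), ← hrange, (hNGstep k).1]
    exact ⟨β k, rfl⟩
  refine ⟨residv_eq_of_minimizers hmem ((hG.2 (k + 1)).1) (fun w hw => ?_) (hG.2 (k + 1)).2, hmem⟩
  obtain ⟨β', rfl⟩ : w ∈ Set.range _ := by rwa [hrange]
  exact (hNGstep k).2 β'

lemma displacementSpan_eq_krylov {xNG xG : ℕ → Fin n → ℝ} {β : ℕ → ℕ → ℝ}
    (hNG : IsNGMRES A b x0 (fun k => k) xNG β) (hG : IsGMRES A b x0 xG) {k0 : ℕ}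
    (hdec : ∀ k, 0 < k → k < k0 →
      norm2 (residv A b (xG k)) < norm2 (residv A b (xG (k - 1)))) :
    ∀ j < k0, displacementSpan xNG x0 j = krylov A (residv A b x0) j := by
  intro j
  induction j using Nat.strong_induction_on with
  | _ j ih =>
    rcases j with _ | j
    · exact fun _ => by rw [displacementSpan_zero hNG.1, krylov_zero]
    intro hj
    have hD : ∀ i ≤ j, displacementSpan xNG x0 i = krylov A (residv A b x0) i :=
      fun i hi => ih i (by omega) (by omega)
    have hK := krylov_succ_eq_sup_span_residv hNG.1 hD
    obtain ⟨hres, hmem⟩ := hNG.residv_succ_eq hG hK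
    rw [hD j le_rfl] at hK
    have hnew : xNG (j + 1) - x0 ∉ krylov A (residv A b x0) j := fun hin => by
      have hle := (hG.2 j).2 _ hin
      rw [hres] at hle
      exact (hdec (j + 1) j.succ_pos hj).not_ge (by simpa using hle)
    rw [displacementSpan_succ, hD j le_rfl,
      sup_span_singleton_eq_of_mem_of_notMem (hK ▸ hmem) hnew, hK]

end NGMRES

theorem stmt2_general (n : ℕ) (A : Matrix (Fin n) (Fin n) ℝ) (b x0 : Fin n → ℝ)
    (xNG xG : ℕ → Fin n → ℝ) (β : ℕ → ℕ → ℝ)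
    (hNG : IsNGMRES A b x0 (fun k => k) xNG β)
    (hG : IsGMRES A b x0 xG)
    (k0 : ℕ)
    (hdec : ∀ k, 0 < k → k < k0 →
      norm2 (residv A b (xG k)) < norm2 (residv A b (xG (k - 1)))) :
    ∀ j ≤ k0, residv A b (xNG j) = residv A b (xG j) := by
  rintro (_ | k) hk
  · rw [hNG.1, hG.1]
  · have hD := displacementSpan_eq_krylov hNG hG hdec
    exact (hNG.residv_succ_eq hG
      (krylov_succ_eq_sup_span_residv hNG.1 fun i hi => hD i (by omega))).1

/-- under strict decrease of the GMRES residual norms up to `k0`,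
the full NGMRES residuals coincide with the GMRES residuals up to `k0`. -/
theorem stmt2 (n : ℕ) (A : Matrix (Fin n) (Fin n) ℝ) (b x0 xstar : Fin n → ℝ)
    (xNG xG : ℕ → Fin n → ℝ) (β : ℕ → ℕ → ℝ)
    (hNG : IsNGMRES A b x0 (fun k => k) xNG β)
    (hG : IsGMRES A b x0 xG)
    (hstar : A.mulVec xstar = b) (hx0 : x0 ≠ xstar)
    (k0 : ℕ) (hk0 : 0 < k0)
    (hrk0 : residv A b (xG (k0 - 1)) ≠ 0)
    (hdec : ∀ k, 0 < k → k < k0 →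
      norm2 (residv A b (xG k)) < norm2 (residv A b (xG (k - 1)))) :
    ∀ j ≤ k0, residv A b (xNG j) = residv A b (xG j) :=
  stmt2_general n A b x0 xNG xG β hNG hG k0 hdec

end
end
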